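/- If (U, V) is a bivariate Gaussian vector with means (μ_x, μ_o), variances (K_xx, K_oo) and covariance K_xo, with s² := K_xx + K_oo − 2K_xo > 0, then E[max(U, V)] = μ_x·Φ((μ_x−μ_o)/s) + μ_o·Φ((μ_o−μ_x)/s) + s·φ((μ_x−μ_o)/s). -/

import Mathlib

open MeasureTheory ProbabilityTheory Real

/-- Standard normal PDF. -/
noncomputable def stdPDF (x : ℝ) : ℝ := (Real.sqrt (2 * Real.pi))⁻¹ * Real.exp (-(x ^ 2) / 2)

/-- Standard normal CDF. -/
noncomputable def stdCDF (x : ℝ) : ℝ := ∫ t in Set.Iic x, stdPDF t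

/-! Write `max U V = V + (U - V)⁺`. Both `V` and `U - V` are linear combinations of the vector,
hence Gaussian, with `U - V ~ N(μx - μo, s²)`, `s² = Kxx + Koo - 2 Kxo`. Standardising
`U - V = s Z + (μx - μo)` reduces `E[(U - V)⁺]` to integrals of `φ` and `z φ(z)` over a
half-line, where `φ' = -z φ` gives the second one in closed form. -/

open Set Filter Topology
open scoped NNReal

lemma stdPDF_eq_gaussianPDFReal : stdPDF = gaussianPDFReal 0 1 := by
  ext x
  simp [stdPDF, gaussianPDFReal]

lemma stdPDF_neg (x : ℝ) : stdPDF (-x) = stdPDF x := by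
  rw [stdPDF, stdPDF, neg_sq]

lemma integrable_stdPDF : Integrable stdPDF :=
  stdPDF_eq_gaussianPDFReal ▸ integrable_gaussianPDFReal 0 1

lemma integral_stdPDF : ∫ x, stdPDF x = 1 :=
  stdPDF_eq_gaussianPDFReal ▸ integral_gaussianPDFReal_eq_one 0 one_ne_zero

lemma integrable_mul_stdPDF : Integrable fun x ↦ x * stdPDF x := by
  refine ((integrable_mul_exp_neg_mul_sq (b := 2⁻¹) (by norm_num)).const_mul
    (√(2 * π))⁻¹).congr (ae_of_all _ fun x ↦ ?_)
  dsimp only [stdPDF]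
  ring_nf

lemma hasDerivAt_stdPDF (x : ℝ) : HasDerivAt stdPDF (-x * stdPDF x) x := by
  have h := ((hasDerivAt_pow 2 x).fun_neg.div_const 2).exp.const_mul (√(2 * π))⁻¹
  refine h.congr_deriv ?_
  rw [stdPDF]
  ring

lemma tendsto_stdPDF_atTop : Tendsto stdPDF atTop (𝓝 0) := by
  have h : Tendsto (fun x : ℝ ↦ -x ^ 2 / 2) atTop atBot :=
    (tendsto_neg_atTop_atBot.comp (tendsto_pow_atTop two_ne_zero)).atBot_div_const two_pos
  have := (tendsto_exp_atBot.comp h).const_mul (√(2 * π))⁻¹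
  rwa [mul_zero] at this

lemma integral_Ioi_mul_stdPDF (a : ℝ) : ∫ x in Ioi a, x * stdPDF x = stdPDF a := by
  have h := integral_Ioi_of_hasDerivAt_of_tendsto' (a := a) (f := fun x ↦ -stdPDF x)
    (fun x _ ↦ (hasDerivAt_stdPDF x).neg.congr_deriv (by ring))
    integrable_mul_stdPDF.integrableOn tendsto_stdPDF_atTop.neg
  simpa using h

lemma integral_Ioi_stdPDF (a : ℝ) : ∫ x in Ioi a, stdPDF x = 1 - stdCDF a := by
  rw [← integral_stdPDF, ← intervalIntegral.integral_Iic_add_Ioi integrable_stdPDF.integrableOn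
    integrable_stdPDF.integrableOn, stdCDF, add_sub_cancel_left]

lemma stdCDF_neg (x : ℝ) : stdCDF (-x) = 1 - stdCDF x := by
  have h := integral_comp_neg_Iic (-x) stdPDF
  simp only [stdPDF_neg, neg_neg] at h
  rw [stdCDF, h, integral_Ioi_stdPDF]

lemma gaussianReal_eq_map_stdGaussian (m : ℝ) (v : ℝ≥0) :
    gaussianReal m v = (gaussianReal 0 1).map (fun z ↦ √v * z + m) := by
  calc gaussianReal m v = ((gaussianReal 0 1).map (√v * ·)).map (· + m) := by
        rw [gaussianReal_map_const_mul, gaussianReal_map_add_const, mul_zero, zero_add]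
        congr
        ext
        simp
    _ = _ := Measure.map_map (by fun_prop) (by fun_prop)

lemma integral_gaussianReal_eq_integral_stdPDF {f : ℝ → ℝ} (hf : Measurable f) (m : ℝ)
    (v : ℝ≥0) : ∫ x, f x ∂gaussianReal m v = ∫ z, stdPDF z * f (√v * z + m) := by
  rw [gaussianReal_eq_map_stdGaussian, integral_map (by fun_prop) hf.aestronglyMeasurable,
    integral_gaussianReal_eq_integral_smul one_ne_zero, stdPDF_eq_gaussianPDFReal]
  rfl

lemma integral_stdPDF_mul_max_zero {s : ℝ} (hs : 0 < s) (m : ℝ) :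
    ∫ z, stdPDF z * max (s * z + m) 0 = m * stdCDF (m / s) + s * stdPDF (m / s) := by
  have h_ind : (fun z ↦ stdPDF z * max (s * z + m) 0)
      = (Ioi (-(m / s))).indicator fun z ↦ s * (z * stdPDF z) + m * stdPDF z := by
    ext z
    by_cases hz : z ∈ Ioi (-(m / s))
    · have : 0 ≤ s * z + m := by
        have := (div_lt_iff₀' hs).1 (neg_div s m ▸ mem_Ioi.1 hz)
        linarith
      rw [indicator_of_mem hz, max_eq_left this]
      ring
    · have : s * z + m ≤ 0 := by
        have := (le_div_iff₀' hs).1 (neg_div s m ▸ not_lt.1 (mem_Ioi.not.1 hz))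
        linarith
      rw [indicator_of_notMem hz, max_eq_right this, mul_zero]
  rw [h_ind, integral_indicator measurableSet_Ioi,
    integral_add (integrable_mul_stdPDF.const_mul s).integrableOn
      (integrable_stdPDF.const_mul m).integrableOn,
    integral_const_mul, integral_const_mul, integral_Ioi_mul_stdPDF, integral_Ioi_stdPDF,
    stdPDF_neg, ← stdCDF_neg, neg_neg]
  ring

lemma integral_max_zero_gaussianReal (m : ℝ) {v : ℝ≥0} (hv : v ≠ 0) :
    ∫ x, max x 0 ∂gaussianReal m v = m * stdCDF (m / √v) + √v * stdPDF (m / √v) := by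
  rw [integral_gaussianReal_eq_integral_stdPDF (by fun_prop),
    integral_stdPDF_mul_max_zero (by positivity)]

lemma hasLaw_of_map_eq {Ω 𝓧 : Type*} {_ : MeasurableSpace Ω} {_ : MeasurableSpace 𝓧}
    {P : Measure Ω} {μ : Measure 𝓧} [NeZero μ] {X : Ω → 𝓧} (h : P.map X = μ) :
    HasLaw X μ P :=
  ⟨.of_map_ne_zero (h ▸ NeZero.ne μ), h⟩

theorem expected_max_bivariate_gaussian_general
    {Ω : Type*} [MeasureSpace Ω]
    (U V : Ω → ℝ) (μx μo Kxx Koo Kxo : ℝ)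
    (hs : 0 < Kxx + Koo - 2 * Kxo)
    (hjoint : ∀ a b : ℝ,
      Measure.map (fun ω => a * U ω + b * V ω) ℙ =
        gaussianReal (a * μx + b * μo)
          (Real.toNNReal (a ^ 2 * Kxx + b ^ 2 * Koo + 2 * a * b * Kxo))) :
    (∫ ω, max (U ω) (V ω) ∂ℙ) =
      μx * stdCDF ((μx - μo) / Real.sqrt (Kxx + Koo - 2 * Kxo))
        + μo * stdCDF ((μo - μx) / Real.sqrt (Kxx + Koo - 2 * Kxo))
        + Real.sqrt (Kxx + Koo - 2 * Kxo)
            * stdPDF ((μx - μo) / Real.sqrt (Kxx + Koo - 2 * Kxo)) := by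
  have hV : HasLaw V (gaussianReal μo Koo.toNNReal) ℙ :=
    hasLaw_of_map_eq (by simpa using hjoint 0 1)
  have hD : HasLaw (fun ω ↦ U ω - V ω)
      (gaussianReal (μx - μo) (Kxx + Koo - 2 * Kxo).toNNReal) ℙ :=
    hasLaw_of_map_eq (by convert hjoint 1 (-1) using 3 <;> ring)
  have h_max : (fun ω ↦ max (U ω) (V ω)) = fun ω ↦ V ω + max (U ω - V ω) 0 := by
    ext ω
    rw [add_comm, ← max_add_add_right, sub_add_cancel, zero_add]
  have h_int := integral_add hV.hasGaussianLaw.integrable hD.hasGaussianLaw.integrable.pos_part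
  have h_pos : ∫ ω, max (U ω - V ω) 0 = ∫ x, max x 0 ∂_ :=
    hD.integral_comp (f := fun x ↦ max x 0) (by fun_prop)
  rw [h_max, h_int, hV.integral_eq, integral_id_gaussianReal, h_pos,
    integral_max_zero_gaussianReal _ (Real.toNNReal_pos.2 hs).ne', Real.coe_toNNReal _ hs.le,
    ← neg_sub μx μo, neg_div, stdCDF_neg]
  ring

/-- Closed form for `E[max(U, V)]` for a bivariate Gaussian vector. -/
theorem expected_max_bivariate_gaussian
    {Ω : Type*} [MeasureSpace Ω] [IsProbabilityMeasure (ℙ : Measure Ω)]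
    (U V : Ω → ℝ) (μx μo Kxx Koo Kxo : ℝ)
    (hs : 0 < Kxx + Koo - 2 * Kxo)
    (hjoint : ∀ a b : ℝ,
      Measure.map (fun ω => a * U ω + b * V ω) ℙ =
        gaussianReal (a * μx + b * μo)
          (Real.toNNReal (a ^ 2 * Kxx + b ^ 2 * Koo + 2 * a * b * Kxo))) :
    (∫ ω, max (U ω) (V ω) ∂ℙ) =
      μx * stdCDF ((μx - μo) / Real.sqrt (Kxx + Koo - 2 * Kxo))
        + μo * stdCDF ((μo - μx) / Real.sqrt (Kxx + Koo - 2 * Kxo))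
        + Real.sqrt (Kxx + Koo - 2 * Kxo)
            * stdPDF ((μx - μo) / Real.sqrt (Kxx + Koo - 2 * Kxo)) :=
  expected_max_bivariate_gaussian_general U V μx μo Kxx Koo Kxo hs hjoint
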